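/- Let X = {x, y, z} and U = {u, v, w} be the bases of two distinct 3-maximal submonoids of Σ*, and let g, h : A* → Σ* be the morphisms with g(𝐚) = x, g(𝐛) = y, g(𝐜) = z and h(𝐚) = u, h(𝐛) = v, h(𝐜) = w. If (r, s) and (r', s') are two distinct minimal solutions of (g, h), then r and r' are not prefix comparable, and s and s' are not prefix comparable. -/

import Mathlib

/-- The basis of a submonoid `M` of the free monoid `Σ*`: `(M \ {ε}) \ (M \ {ε})²`. -/
def basisOf {α : Type*} (M : Submonoid (FreeMonoid α)) : Set (FreeMonoid α) :=
  ((M : Set (FreeMonoid α)) \ {1}) \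
    {w | ∃ u ∈ (M : Set (FreeMonoid α)) \ {1}, ∃ v ∈ (M : Set (FreeMonoid α)) \ {1}, w = u * v}

/-- A submonoid of `Σ*` is `k`-maximal if its rank (cardinality of its basis) is at most `k`
and it is maximal (w.r.t. inclusion) among submonoids of rank at most `k`. -/
def IsKMaximal {α : Type*} (k : ℕ) (M : Submonoid (FreeMonoid α)) : Prop :=
  (basisOf M).Finite ∧ (basisOf M).ncard ≤ k ∧
    ∀ M' : Submonoid (FreeMonoid α),
      (basisOf M').Finite → (basisOf M').ncard ≤ k → M ≤ M' → M = M'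

/-- A solution of the pair of morphisms `(g, h)`: a pair `(r, s)` of nonempty words
over the three-letter alphabet with `g r = h s` (an element of the coincidence set). -/
def IsSolution {α : Type*} (g h : FreeMonoid (Fin 3) →* FreeMonoid α)
    (p : FreeMonoid (Fin 3) × FreeMonoid (Fin 3)) : Prop :=
  p.1 ≠ 1 ∧ p.2 ≠ 1 ∧ g p.1 = h p.2

/-- `(p.1, p.2) < (q.1, q.2)`: componentwise proper prefix of pairs of words. -/
def PairLt (p q : FreeMonoid (Fin 3) × FreeMonoid (Fin 3)) : Prop :=
  (∃ z : FreeMonoid (Fin 3), z ≠ 1 ∧ q.1 = p.1 * z) ∧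
  (∃ z : FreeMonoid (Fin 3), z ≠ 1 ∧ q.2 = p.2 * z)

/-- A minimal solution: a solution having no proper (pairwise) prefix which is a solution. -/
def IsMinimalSolution {α : Type*} (g h : FreeMonoid (Fin 3) →* FreeMonoid α)
    (p : FreeMonoid (Fin 3) × FreeMonoid (Fin 3)) : Prop :=
  IsSolution g h p ∧ ∀ q, PairLt q p → ¬ IsSolution g h q

/-!
A basis element of a `k`-maximal submonoid is never a proper prefix of another one: if
`b' = b t` with `t ≠ 1`, replacing `b'` by `t` yields at most `k` generators of a submonoid
containing the original one, so by maximality `t` already lies in it and `b'` decomposes.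
Hence `g` and `h` are prefix morphisms, and such morphisms decode from the left. If `r' = r t`,
then `h s' = g r' = h s · g t`, and decoding with `h` gives `s' = s t'`; so `(r, s) < (r', s')`
unless the two solutions coincide, contradicting minimality. The second components are handled
by exchanging the roles of `g` and `h`.
-/

open FreeMonoid Submonoid

section

variable {α β : Type*}

lemma basisOf_closure_subset (S : Set (FreeMonoid α)) : basisOf (closure S) ⊆ S := by
  rintro b ⟨⟨hb, hb1⟩, hb_indec⟩
  induction hb using closure_induction with
  | mem x hx => exact hx
  | one => exact absurd rfl hb1
  | mul a c ha hc iha ihc =>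
    by_cases ha1 : a = 1
    · subst ha1; rw [one_mul] at hb1 hb_indec ⊢; exact ihc hb_indec hb1
    by_cases hc1 : c = 1
    · subst hc1; rw [mul_one] at hb1 hb_indec ⊢; exact iha hb_indec hb1
    exact absurd ⟨a, ⟨ha, ha1⟩, c, ⟨hc, hc1⟩, rfl⟩ hb_indec

lemma eq_one_of_mem_basis_of_eq_mul {S : Set (FreeMonoid α)} {k : ℕ}
    (hS : basisOf (closure S) = S) (hmax : IsKMaximal k (closure S))
    {b b' t : FreeMonoid α} (hb : b ∈ S) (hb' : b' ∈ S) (hbt : b' = b * t) : t = 1 := by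
  by_contra ht
  have hbb' : b ≠ b' := fun h => ht (by simpa [← h] using hbt)
  set S' := insert t (S \ {b'})
  have hSfin : S.Finite := hS ▸ hmax.1
  have hbS' : b ∈ S' := Or.inr ⟨hb, hbb'⟩
  have hle : closure S ≤ closure S' := by
    refine closure_le.mpr fun c hc => ?_
    by_cases hcb : c = b'
    · rw [hcb, hbt]
      exact mul_mem (subset_closure hbS') (subset_closure (Set.mem_insert t _))
    · exact subset_closure (Or.inr ⟨hc, hcb⟩)
  have hS'card : S'.ncard ≤ k := calc
    S'.ncard ≤ (S \ {b'}).ncard + 1 := Set.ncard_insert_le _ _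
    _ = S.ncard := by rw [Set.ncard_sdiff_singleton_add_one hb' hSfin]
    _ ≤ k := hS ▸ hmax.2.1
  have hS'fin : S'.Finite := hSfin.sdiff.insert t
  have heq : closure S = closure S' := hmax.2.2 _
    (hS'fin.subset (basisOf_closure_subset S'))
    ((Set.ncard_le_ncard (basisOf_closure_subset S') hS'fin).trans hS'card) hle
  have htS : t ∈ closure S := heq ▸ subset_closure (Set.mem_insert t _)
  have hb1 : b ≠ 1 := (hS.symm ▸ hb : b ∈ basisOf (closure S)).1.2
  exact (hS.symm ▸ hb' : b' ∈ basisOf (closure S)).2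
    ⟨b, ⟨subset_closure hb, hb1⟩, t, ⟨htS, ht⟩, hbt⟩

lemma FreeMonoid.exists_eq_mul_or_of_mul_eq_mul {a b c d : FreeMonoid α} (h : a * b = c * d) :
    (∃ m, c = a * m) ∨ ∃ m, a = c * m := by
  rcases List.append_eq_append_iff.mp (congrArg toList h) with ⟨e, hc, -⟩ | ⟨e, ha, -⟩
  · exact Or.inl ⟨ofList e, toList.injective (by simpa using hc)⟩
  · exact Or.inr ⟨ofList e, toList.injective (by simpa using ha)⟩

lemma FreeMonoid.eq_one_of_map_eq_one {φ : FreeMonoid β →* FreeMonoid α}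
    (hφ : ∀ c, φ (of c) ≠ 1) {s : FreeMonoid β} (hs : φ s = 1) : s = 1 := by
  induction s using FreeMonoid.inductionOn' with
  | one => rfl
  | of_mul c s _ => exact absurd (eq_one_of_mul_right' (by rwa [← map_mul])) (hφ c)

/-- Nonerasing, injective on letters, and with letter images forming a prefix code. -/
structure IsPrefixMorphism (φ : FreeMonoid β →* FreeMonoid α) : Prop where
  ne_one : ∀ c, φ (of c) ≠ 1
  eq_of_map_of_eq_mul : ∀ c d m, φ (of d) = φ (of c) * m → c = d

lemma IsPrefixMorphism.exists_eq_mul_of_map_mul_eq {φ : FreeMonoid β →* FreeMonoid α}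
    (hφ : IsPrefixMorphism φ) {r s : FreeMonoid β} {m : FreeMonoid α} (h : φ r * m = φ s) :
    ∃ t, s = r * t ∧ φ t = m := by
  induction r using FreeMonoid.inductionOn' generalizing s with
  | one => exact ⟨s, (one_mul s).symm, by simpa using h.symm⟩
  | of_mul c r ih =>
    cases s using FreeMonoid.casesOn with
    | one =>
      rw [map_one, map_mul, mul_assoc] at h
      exact absurd (eq_one_of_mul_right' h) (hφ.ne_one c)
    | of_mul d s =>
      rw [map_mul, map_mul, mul_assoc] at h
      obtain rfl : c = d := by
        rcases exists_eq_mul_or_of_mul_eq_mul h with ⟨m', hm'⟩ | ⟨m', hm'⟩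
        exacts [hφ.eq_of_map_of_eq_mul c d m' hm', (hφ.eq_of_map_of_eq_mul d c m' hm').symm]
      obtain ⟨t, rfl, ht⟩ := ih (mul_left_cancel h)
      exact ⟨t, (mul_assoc _ _ _).symm, ht⟩

lemma isPrefixMorphism_of_range_eq_basis [Finite β] {φ : FreeMonoid β →* FreeMonoid α}
    {S : Set (FreeMonoid α)} {k : ℕ} (hS : basisOf (closure S) = S)
    (hmax : IsKMaximal k (closure S)) (hrange : Set.range (fun c => φ (of c)) = S)
    (hcard : S.ncard = Nat.card β) : IsPrefixMorphism φ := by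
  have hmem (c : β) : φ (of c) ∈ S := hrange ▸ Set.mem_range_self c
  have hinj : Function.Injective fun c => φ (of c) := by
    rw [← Set.injOn_univ]
    exact Set.injOn_of_ncard_image_eq (by rw [Set.image_univ, hrange, hcard, Set.ncard_univ])
  refine ⟨fun c => (hS.symm ▸ hmem c : φ (of c) ∈ basisOf (closure S)).1.2,
    fun c d m h => ?_⟩
  refine (hinj (show φ (of d) = φ (of c) from ?_)).symm
  rw [h, eq_one_of_mem_basis_of_eq_mul hS hmax (hmem c) (hmem d) h, mul_one]

section Solutions

variable {g h : FreeMonoid (Fin 3) →* FreeMonoid α}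
  {p q : FreeMonoid (Fin 3) × FreeMonoid (Fin 3)}

lemma IsSolution.swap (hp : IsSolution g h p) : IsSolution h g p.swap :=
  ⟨hp.2.1, hp.1, hp.2.2.symm⟩

lemma PairLt.swap (hpq : PairLt p q) : PairLt p.swap q.swap := ⟨hpq.2, hpq.1⟩

lemma IsMinimalSolution.swap (hp : IsMinimalSolution g h p) : IsMinimalSolution h g p.swap :=
  ⟨hp.1.swap, fun q hq hsol => hp.2 q.swap hq.swap hsol.swap⟩

lemma IsMinimalSolution.not_exists_fst_eq_mul (hg : ∀ c, g (of c) ≠ 1)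
    (hh : IsPrefixMorphism h) (hp : IsSolution g h p) (hq : IsMinimalSolution g h q)
    (hpq : p ≠ q) :
    ¬ ∃ t, q.1 = p.1 * t := by
  rintro ⟨t, ht⟩
  obtain ⟨s, hs, hst⟩ := hh.exists_eq_mul_of_map_mul_eq (r := p.2) (s := q.2) (m := g t)
    (by rw [← hp.2.2, ← map_mul, ← ht, hq.1.2.2])
  by_cases ht1 : t = 1
  · have hs1 : s = 1 := eq_one_of_map_eq_one hh.ne_one (by rw [hst, ht1, map_one])
    exact hpq (Prod.ext (by rw [ht, ht1, mul_one]) (by rw [hs, hs1, mul_one]))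
  · have hs1 : s ≠ 1 := fun hs1 => ht1 (eq_one_of_map_eq_one hg (by rw [← hst, hs1, map_one]))
    exact hq.2 p ⟨⟨t, ht1, ht⟩, ⟨s, hs1, hs⟩⟩ hp

lemma IsMinimalSolution.fst_not_prefix_comparable (hg : ∀ c, g (of c) ≠ 1)
    (hh : IsPrefixMorphism h) (hp : IsMinimalSolution g h p) (hq : IsMinimalSolution g h q)
    (hpq : p ≠ q) : ¬ ((∃ t, q.1 = p.1 * t) ∨ ∃ t, p.1 = q.1 * t) :=
  not_or.mpr
    ⟨hq.not_exists_fst_eq_mul hg hh hp.1 hpq, hp.not_exists_fst_eq_mul hg hh hq.1 hpq.symm⟩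

end Solutions

lemma range_fin_three (f : Fin 3 → α) : Set.range f = {f 0, f 1, f 2} := by
  ext; simp [Fin.exists_fin_succ, eq_comm]

end

theorem minimal_solutions_not_prefix_comparable_general {α : Type*}
    (x y z u v w : FreeMonoid α)
    (hXcard : ({x, y, z} : Set (FreeMonoid α)).ncard = 3)
    (hUcard : ({u, v, w} : Set (FreeMonoid α)).ncard = 3)
    (hXbasis : basisOf (Submonoid.closure {x, y, z}) = {x, y, z})
    (hUbasis : basisOf (Submonoid.closure {u, v, w}) = {u, v, w})
    (hXmax : IsKMaximal 3 (Submonoid.closure ({x, y, z} : Set (FreeMonoid α))))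
    (hUmax : IsKMaximal 3 (Submonoid.closure ({u, v, w} : Set (FreeMonoid α))))
    (g h : FreeMonoid (Fin 3) →* FreeMonoid α)
    (hga : g (FreeMonoid.of 0) = x) (hgb : g (FreeMonoid.of 1) = y)
    (hgc : g (FreeMonoid.of 2) = z)
    (hha : h (FreeMonoid.of 0) = u) (hhb : h (FreeMonoid.of 1) = v)
    (hhc : h (FreeMonoid.of 2) = w)
    (p q : FreeMonoid (Fin 3) × FreeMonoid (Fin 3))
    (hp : IsMinimalSolution g h p) (hq : IsMinimalSolution g h q) (hpq : p ≠ q) :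
    ¬ ((∃ t : FreeMonoid (Fin 3), q.1 = p.1 * t) ∨ (∃ t : FreeMonoid (Fin 3), p.1 = q.1 * t)) ∧
    ¬ ((∃ t : FreeMonoid (Fin 3), q.2 = p.2 * t) ∨ (∃ t : FreeMonoid (Fin 3), p.2 = q.2 * t)) := by
  have hg : IsPrefixMorphism g := isPrefixMorphism_of_range_eq_basis hXbasis hXmax
    (by rw [range_fin_three, hga, hgb, hgc]) (by rw [hXcard, Nat.card_fin])
  have hh : IsPrefixMorphism h := isPrefixMorphism_of_range_eq_basis hUbasis hUmax
    (by rw [range_fin_three, hha, hhb, hhc]) (by rw [hUcard, Nat.card_fin])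
  exact ⟨hp.fst_not_prefix_comparable hg.ne_one hh hq hpq,
    hp.swap.fst_not_prefix_comparable hh.ne_one hg hq.swap (Prod.swap_injective.ne hpq)⟩

/-- Components of distinct minimal solutions are pairwiseprefix-incomparable. -/
theorem minimal_solutions_not_prefix_comparable {α : Type*}
    (x y z u v w : FreeMonoid α)
    (hXcard : ({x, y, z} : Set (FreeMonoid α)).ncard = 3)
    (hUcard : ({u, v, w} : Set (FreeMonoid α)).ncard = 3)
    (hXU : ({x, y, z} : Set (FreeMonoid α)) ≠ {u, v, w})
    (hXbasis : basisOf (Submonoid.closure {x, y, z}) = {x, y, z})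
    (hUbasis : basisOf (Submonoid.closure {u, v, w}) = {u, v, w})
    (hXmax : IsKMaximal 3 (Submonoid.closure ({x, y, z} : Set (FreeMonoid α))))
    (hUmax : IsKMaximal 3 (Submonoid.closure ({u, v, w} : Set (FreeMonoid α))))
    (g h : FreeMonoid (Fin 3) →* FreeMonoid α)
    (hga : g (FreeMonoid.of 0) = x) (hgb : g (FreeMonoid.of 1) = y)
    (hgc : g (FreeMonoid.of 2) = z)
    (hha : h (FreeMonoid.of 0) = u) (hhb : h (FreeMonoid.of 1) = v)
    (hhc : h (FreeMonoid.of 2) = w)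
    (p q : FreeMonoid (Fin 3) × FreeMonoid (Fin 3))
    (hp : IsMinimalSolution g h p) (hq : IsMinimalSolution g h q) (hpq : p ≠ q) :
    ¬ ((∃ t : FreeMonoid (Fin 3), q.1 = p.1 * t) ∨ (∃ t : FreeMonoid (Fin 3), p.1 = q.1 * t)) ∧
    ¬ ((∃ t : FreeMonoid (Fin 3), q.2 = p.2 * t) ∨ (∃ t : FreeMonoid (Fin 3), p.2 = q.2 * t)) :=
  minimal_solutions_not_prefix_comparable_general x y z u v w hXcard hUcard hXbasis hUbasis hXmax
    hUmax g h hga hgb hgc hha hhb hhc p q hp hq hpq
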